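/- Let ε ∈ [0,1] and let k ≥ 1 be an integer. For t ∈ [0,1], define δ_{k−1}(t) = t and, descending via the recursion (∗), δ_j(t) = δ_{j+1}(t) / (δ_{j+1}(t) + (1−δ_{j+1}(t))·((1−δ_{j+1}(t))/(1−δ_{j+2}(t)))^{ε̄}) for j = k−2, k−3, …, 0 (with the convention δ̄_k := 1). Then the maximum of R_ε over the full cube [0,1]^k equals the maximum over the one-parameter family: max over {(δ₀,…,δ_{k−1}) ∈ [0,1]^k} of R_ε(δ₀,…,δ_{k−1}) = max over {t ∈ [0,1/2]} of R_ε(δ₀(t),…,δ_{k−2}(t), t). -/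

import Mathlib

/-- The binary entropy function (base 2), with `H2 0 = H2 1 = 0`. -/
noncomputable def H2 (x : ℝ) : ℝ := -(x * Real.logb 2 x) - (1 - x) * Real.logb 2 (1 - x)

/-- The function `R_ε(δ₀,…,δ_{k−1})`. -/
noncomputable def Rfun (ε : ℝ) (k : ℕ) (δ : ℕ → ℝ) : ℝ :=
  (∑ i ∈ Finset.range k, (1 - ε) ^ (i + 1) * H2 (δ i) * ∏ m ∈ Finset.range i, δ m) /
  (1 + ∑ i ∈ Finset.range k, (1 - ε) ^ (i + 1) * ∏ m ∈ Finset.range (i + 1), δ m)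

/-- The descending recursion (∗): `chain ε t s` is `δ_{k−1−s}(t)` when the recursion is
started at `δ_{k−1}(t) = t`.  Thus `chain ε t 0 = t`,
`chain ε t 1 = t/(t + (1−t)·((1−t)/1)^{ε̄})` (convention `δ̄_k := 1`), and
`chain ε t (s+2) = b/(b + (1−b)·((1−b)/(1−a))^{ε̄})` where `b = chain ε t (s+1)` and
`a = chain ε t s`. -/
noncomputable def chain (ε t : ℝ) : ℕ → ℝ
  | 0 => t
  | 1 => t / (t + (1 - t) * ((1 - t) / 1) ^ (1 - ε))
  | (s + 2) =>
      chain ε t (s + 1) /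
        (chain ε t (s + 1) + (1 - chain ε t (s + 1)) *
          ((1 - chain ε t (s + 1)) / (1 - chain ε t s)) ^ (1 - ε))

/-!
Let `δ` maximise `R_ε` on the compact cube and put `M = R_ε(δ)`. Then `δ` also maximises
`N - M·D` (numerator minus `M` times denominator), which in Horner form reads
`ε̄·H₂(δ₀) - M + ε̄·δ₀·(the same expression for the tail δ₁, δ₂, …)`.
Since `H₂` has infinite slope at `0` and `1`, every coordinate of the maximiser is interior
(when `ε̄ > 0`), and the first-order condition in `δⱼ`, together with
`H₂(x) - x·H₂'(x) = -log₂(1 - x)` for the optimal value of the tail, reads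
`log₂((1 - δⱼ)/δⱼ) = M + ε̄·log₂(1 - δⱼ₊₁)`, where `δₖ := 0`.
Subtracting consecutive conditions gives exactly the recursion `(∗)`, so `δ` is the chain
started at `t = δₖ₋₁`, and `t ≤ 1/2` because `log₂((1 - t)/t) = M ≥ 0`.
When `ε = 1` or `k = 0`, `R_ε` vanishes identically.
-/

open Real Finset

@[simp] lemma H2_zero : H2 0 = 0 := by simp [H2]

@[simp] lemma H2_one : H2 1 = 0 := by simp [H2]

lemma H2_eq_binEntropy_div (x : ℝ) : H2 x = binEntropy x / log 2 := by
  simp only [H2, binEntropy, logb, log_inv]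
  ring

@[fun_prop] lemma continuous_H2 : Continuous H2 := by
  simpa only [funext H2_eq_binEntropy_div] using binEntropy_continuous.div_const (log 2)

lemma H2_one_sub (x : ℝ) : H2 (1 - x) = H2 x := by
  rw [H2_eq_binEntropy_div, H2_eq_binEntropy_div, binEntropy_one_sub]

lemma hasDerivAt_H2 {x : ℝ} (h0 : x ≠ 0) (h1 : x ≠ 1) :
    HasDerivAt H2 (logb 2 (1 - x) - logb 2 x) x := by
  simpa only [funext H2_eq_binEntropy_div, logb, sub_div] using
    (hasDerivAt_binEntropy h0 h1).div_const (log 2)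

lemma H2_sub_mul_deriv (x : ℝ) :
    H2 x - x * (logb 2 (1 - x) - logb 2 x) = -logb 2 (1 - x) := by
  rw [H2]
  ring

lemma neg_mul_logb_le_H2 {x : ℝ} (hx : x ∈ Set.Icc (0 : ℝ) 1) : -(x * logb 2 x) ≤ H2 x := by
  have : (1 - x) * logb 2 (1 - x) ≤ 0 := mul_nonpos_of_nonneg_of_nonpos (by linarith [hx.2])
    (logb_nonpos one_lt_two (by linarith [hx.2]) (by linarith [hx.1]))
  rw [H2]
  linarith

lemma exists_pos_H2_add_mul (g : ℝ) : ∃ u ∈ Set.Ioo (0 : ℝ) 1, 0 < H2 u + g * u := by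
  set u : ℝ := 2 ^ (-(|g| + 1))
  have hu0 : 0 < u := by positivity
  have hu1 : u < 1 := rpow_lt_one_of_one_lt_of_neg one_lt_two (by linarith [abs_nonneg g])
  refine ⟨u, ⟨hu0, hu1⟩, ?_⟩
  have := neg_mul_logb_le_H2 ⟨hu0.le, hu1.le⟩
  rw [show logb 2 u = -(|g| + 1) from logb_rpow two_pos (by norm_num)] at this
  nlinarith [neg_abs_le g]

lemma mem_Ioo_and_logb_odds_of_isMaxOn_H2_add_mul {g x : ℝ} (hx : x ∈ Set.Icc (0 : ℝ) 1)
    (hmax : IsMaxOn (fun s => H2 s + g * s) (Set.Icc 0 1) x) :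
    x ∈ Set.Ioo (0 : ℝ) 1 ∧ logb 2 (1 - x) - logb 2 x = -g := by
  have hx0 : x ≠ 0 := by
    rintro rfl
    obtain ⟨u, hu, hpos⟩ := exists_pos_H2_add_mul g
    have : H2 u + g * u ≤ H2 0 + g * 0 := hmax (Set.Ioo_subset_Icc_self hu)
    simp only [H2_zero, mul_zero, add_zero] at this
    linarith
  have hx1 : x ≠ 1 := by
    rintro rfl
    obtain ⟨u, hu, hpos⟩ := exists_pos_H2_add_mul (-g)
    have : H2 (1 - u) + g * (1 - u) ≤ H2 1 + g * 1 :=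
      hmax ⟨by linarith [hu.2], by linarith [hu.1]⟩
    rw [H2_one_sub, H2_one] at this
    linarith
  have hIoo : x ∈ Set.Ioo (0 : ℝ) 1 := ⟨hx.1.lt_of_ne' hx0, hx.2.lt_of_ne hx1⟩
  have hderiv := (hasDerivAt_H2 hx0 hx1).add ((hasDerivAt_id x).const_mul g)
  have := (hmax.isLocalMax (Icc_mem_nhds hIoo.1 hIoo.2)).hasDerivAt_eq_zero hderiv
  exact ⟨hIoo, by linarith⟩

def unitCube (n : ℕ) : Set (ℕ → ℝ) := {δ | ∀ i < n, δ i ∈ Set.Icc 0 1}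

lemma zero_mem_unitCube (n : ℕ) : (0 : ℕ → ℝ) ∈ unitCube n :=
  fun _ _ => ⟨le_rfl, zero_le_one⟩

lemma cons_mem_unitCube {n : ℕ} {s : ℝ} (hs : s ∈ Set.Icc (0 : ℝ) 1) {ρ : ℕ → ℝ}
    (hρ : ρ ∈ unitCube n) : (fun | 0 => s | i + 1 => ρ i) ∈ unitCube (n + 1) := by
  rintro (_ | i) hi
  exacts [hs, hρ i (by omega)]

lemma Rfun_congr {ε : ℝ} {k : ℕ} {δ δ' : ℕ → ℝ} (h : ∀ i < k, δ i = δ' i) :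
    Rfun ε k δ = Rfun ε k δ' := by
  have hprod : ∀ i ≤ k, ∏ m ∈ range i, δ m = ∏ m ∈ range i, δ' m := fun i hi =>
    prod_congr rfl fun m hm => h m (by simp at hm; omega)
  unfold Rfun
  congr 1
  · exact sum_congr rfl fun i hi => by
      rw [mem_range] at hi
      rw [h i hi, hprod i hi.le]
  · exact congrArg _ <| sum_congr rfl fun i hi => by
      rw [mem_range] at hi
      rw [hprod (i + 1) hi]

lemma Rfun_zero (ε : ℝ) (k : ℕ) : Rfun ε k 0 = 0 := by
  simp [Rfun]

lemma Rfun_den_pos {ε : ℝ} (hε : ε ≤ 1) {k : ℕ} {δ : ℕ → ℝ}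
    (hδ : δ ∈ unitCube k) :
    0 < 1 + ∑ i ∈ range k, (1 - ε) ^ (i + 1) * ∏ m ∈ range (i + 1), δ m := by
  have : 0 ≤ ∑ i ∈ range k, (1 - ε) ^ (i + 1) * ∏ m ∈ range (i + 1), δ m :=
    sum_nonneg fun i hi => mul_nonneg (pow_nonneg (by linarith) _) <|
      prod_nonneg fun m hm => (hδ m (by simp at hi hm; omega)).1
  linarith

lemma continuousOn_Rfun {ε : ℝ} (hε : ε ≤ 1) (k : ℕ) :
    ContinuousOn (Rfun ε k) (unitCube k) :=
  ContinuousOn.div (by fun_prop) (by fun_prop) fun _ hδ => (Rfun_den_pos hε hδ).ne'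

lemma exists_isMaxOn_Rfun {ε : ℝ} (hε : ε ≤ 1) (k : ℕ) :
    ∃ δ ∈ unitCube k, IsMaxOn (Rfun ε k) (unitCube k) δ := by
  let S : Set (ℕ → ℝ) := Set.univ.pi fun _ => Set.Icc 0 1
  have hS : S ⊆ unitCube k := fun δ hδ i _ => hδ i trivial
  obtain ⟨δ, hδ, hmax⟩ := (isCompact_univ_pi fun _ => isCompact_Icc).exists_isMaxOn
    (⟨0, fun _ _ => ⟨le_rfl, zero_le_one⟩⟩ : S.Nonempty) ((continuousOn_Rfun hε k).mono hS)
  refine ⟨δ, hS hδ, fun δ' hδ' => ?_⟩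
  have htrunc : (fun i => if i < k then δ' i else 0) ∈ S := fun i _ => by
    dsimp only
    split_ifs with hi
    exacts [hδ' i hi, ⟨le_rfl, zero_le_one⟩]
  show Rfun ε k δ' ≤ Rfun ε k δ
  rw [Rfun_congr fun i hi => (if_pos hi).symm]
  exact hmax htrunc

/-- `Rgap (1 - ε) M k δ` is the numerator of `Rfun ε k δ` minus `M` times its denominator
(`Rgap_eq`), in Horner form with respect to `δ 0`. -/
noncomputable def Rgap (c M : ℝ) : ℕ → (ℕ → ℝ) → ℝ
  | 0, _ => -M
  | n + 1, δ => c * H2 (δ 0) - M + c * δ 0 * Rgap c M n (fun i => δ (i + 1))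

lemma Rgap_eq (c M : ℝ) (n : ℕ) (δ : ℕ → ℝ) :
    Rgap c M n δ = ∑ i ∈ range n, c ^ (i + 1) * H2 (δ i) * ∏ m ∈ range i, δ m -
      M * (1 + ∑ i ∈ range n, c ^ (i + 1) * ∏ m ∈ range (i + 1), δ m) := by
  induction n generalizing δ with
  | zero => simp [Rgap]
  | succ n ih =>
    have hnum : ∑ i ∈ range (n + 1), c ^ (i + 1) * H2 (δ i) * ∏ m ∈ range i, δ m =
        c * H2 (δ 0) + c * δ 0 *
          ∑ i ∈ range n, c ^ (i + 1) * H2 (δ (i + 1)) * ∏ m ∈ range i, δ (m + 1) := by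
      rw [sum_range_succ', mul_sum, add_comm]
      simp only [prod_range_succ', prod_range_zero]
      congr 1
      · ring
      · exact sum_congr rfl fun i _ => by ring
    have hden : ∑ i ∈ range (n + 1), c ^ (i + 1) * ∏ m ∈ range (i + 1), δ m =
        c * δ 0 * (1 + ∑ i ∈ range n, c ^ (i + 1) * ∏ m ∈ range (i + 1), δ (m + 1)) := by
      rw [sum_range_succ', mul_add, mul_sum, add_comm]
      simp only [prod_range_succ' (fun m => δ m), prod_range_zero]
      congr 1
      · ring
      · exact sum_congr rfl fun i _ => by ring
    rw [Rgap, ih, hnum, hden]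
    ring

lemma Rgap_eq_mul_Rfun_sub {ε : ℝ} (hε : ε ≤ 1) (M : ℝ) {k : ℕ} {δ : ℕ → ℝ}
    (hδ : δ ∈ unitCube k) :
    Rgap (1 - ε) M k δ =
      (1 + ∑ i ∈ range k, (1 - ε) ^ (i + 1) * ∏ m ∈ range (i + 1), δ m) *
        (Rfun ε k δ - M) := by
  rw [Rgap_eq, Rfun, mul_sub, mul_div_cancel₀ _ (Rfun_den_pos hε hδ).ne', mul_comm M]

lemma isMaxOn_Rgap_of_isMaxOn_Rfun {ε : ℝ} (hε : ε ≤ 1) {k : ℕ} {δ : ℕ → ℝ}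
    (hδ : δ ∈ unitCube k) (hmax : IsMaxOn (Rfun ε k) (unitCube k) δ) :
    IsMaxOn (Rgap (1 - ε) (Rfun ε k δ) k) (unitCube k) δ := by
  intro δ' hδ'
  have : Rfun ε k δ' ≤ Rfun ε k δ := hmax hδ'
  show Rgap _ _ _ δ' ≤ Rgap _ _ _ δ
  rw [Rgap_eq_mul_Rfun_sub hε _ hδ', Rgap_eq_mul_Rfun_sub hε _ hδ, sub_self, mul_zero]
  exact mul_nonpos_of_nonneg_of_nonpos (Rfun_den_pos hε hδ').le (by linarith)

section Maximizer

variable {c M : ℝ} {n : ℕ} {δ : ℕ → ℝ}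

lemma Rgap_cons (s : ℝ) (ρ : ℕ → ℝ) :
    Rgap c M (n + 1) (fun | 0 => s | i + 1 => ρ i) = c * H2 s - M + c * s * Rgap c M n ρ :=
  rfl

lemma first_order_of_isMaxOn_Rgap (hc : 0 < c) (hδ : δ ∈ unitCube (n + 1))
    (hmax : IsMaxOn (Rgap c M (n + 1)) (unitCube (n + 1)) δ) :
    δ 0 ∈ Set.Ioo (0 : ℝ) 1 ∧
      logb 2 (1 - δ 0) - logb 2 (δ 0) = -Rgap c M n (fun i => δ (i + 1)) := by
  set g := Rgap c M n (fun i => δ (i + 1))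
  refine mem_Ioo_and_logb_odds_of_isMaxOn_H2_add_mul (hδ 0 n.succ_pos) fun s hs => ?_
  have : c * (H2 s + g * s) ≤ c * (H2 (δ 0) + g * δ 0) := by
    have : Rgap c M (n + 1) _ ≤ Rgap c M (n + 1) δ :=
      hmax (cons_mem_unitCube hs fun i hi => hδ (i + 1) (by omega))
    rw [Rgap_cons, Rgap] at this
    linarith
  exact le_of_mul_le_mul_left this hc

lemma isMaxOn_Rgap_tail (hc : 0 < c) (hδ0 : δ 0 ∈ Set.Ioo (0 : ℝ) 1)
    (hmax : IsMaxOn (Rgap c M (n + 1)) (unitCube (n + 1)) δ) :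
    IsMaxOn (Rgap c M n) (unitCube n) (fun i => δ (i + 1)) := by
  intro ρ hρ
  have : Rgap c M (n + 1) _ ≤ Rgap c M (n + 1) δ :=
    hmax (cons_mem_unitCube (Set.Ioo_subset_Icc_self hδ0) hρ)
  rw [Rgap_cons, Rgap] at this
  exact le_of_mul_le_mul_left (by linarith) (mul_pos hc hδ0.1)

lemma isMaxOn_Rgap_shift (hc : 0 < c) (j : ℕ) (hδ : δ ∈ unitCube (n + j))
    (hmax : IsMaxOn (Rgap c M (n + j)) (unitCube (n + j)) δ) :
    IsMaxOn (Rgap c M n) (unitCube n) (fun i => δ (j + i)) := by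
  induction j generalizing δ with
  | zero => simpa using hmax
  | succ j ih =>
    have hfo := first_order_of_isMaxOn_Rgap hc hδ hmax
    have := ih (fun i hi => hδ (i + 1) (by omega)) (isMaxOn_Rgap_tail hc hfo.1 hmax)
    simpa only [add_right_comm, add_assoc] using this

lemma Rgap_eq_of_isMaxOn (hc : 0 < c) (hδ : δ ∈ unitCube (n + 1))
    (hmax : IsMaxOn (Rgap c M (n + 1)) (unitCube (n + 1)) δ) :
    Rgap c M (n + 1) δ = -(c * logb 2 (1 - δ 0)) - M := by
  have hfo := (first_order_of_isMaxOn_Rgap hc hδ hmax).2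
  have := H2_sub_mul_deriv (δ 0)
  rw [Rgap]
  linear_combination c * this + c * δ 0 * hfo

end Maximizer

lemma div_add_one_sub_mul_rpow_mem_Ico {b w : ℝ} (hb : b ∈ Set.Ico (0 : ℝ) 1) (hw : 0 < w)
    (c : ℝ) : b / (b + (1 - b) * w ^ c) ∈ Set.Ico (0 : ℝ) 1 := by
  have hpos : 0 < (1 - b) * w ^ c := mul_pos (by linarith [hb.2]) (rpow_pos_of_pos hw c)
  exact ⟨div_nonneg hb.1 (by linarith [hb.1]),
    (div_lt_one (by linarith [hb.1])).2 (by linarith)⟩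

lemma chain_mem_Ico {ε t : ℝ} (ht : t ∈ Set.Ico (0 : ℝ) 1) :
    ∀ s, chain ε t s ∈ Set.Ico (0 : ℝ) 1
  | 0 => ht
  | 1 => div_add_one_sub_mul_rpow_mem_Ico ht (by simpa using ht.2) _
  | s + 2 => by
    have hb := chain_mem_Ico (ε := ε) ht (s + 1)
    have ha := chain_mem_Ico (ε := ε) ht s
    exact div_add_one_sub_mul_rpow_mem_Ico hb
      (div_pos (by linarith [hb.2]) (by linarith [ha.2])) _

lemma eq_div_of_logb_odds {x b w c : ℝ} (hx : x ∈ Set.Ioo (0 : ℝ) 1)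
    (hb : b ∈ Set.Ioo (0 : ℝ) 1) (hw : 0 < w)
    (h : logb 2 (1 - x) - logb 2 x = logb 2 (1 - b) - logb 2 b + c * logb 2 w) :
    x = b / (b + (1 - b) * w ^ c) := by
  have hwc : 0 < w ^ c := rpow_pos_of_pos hw c
  have h1x : 0 < 1 - x := by linarith [hx.2]
  have h1b : 0 < 1 - b := by linarith [hb.2]
  have hcross : (1 - x) * b = x * ((1 - b) * w ^ c) := by
    refine logb_injOn_pos one_lt_two (mul_pos h1x hb.1) (mul_pos hx.1 (mul_pos h1b hwc)) ?_
    rw [logb_mul h1x.ne' hb.1.ne', logb_mul hx.1.ne' (mul_pos h1b hwc).ne',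
      logb_mul h1b.ne' hwc.ne', logb_rpow_eq_mul_logb_of_pos hw]
    linarith
  rw [eq_div_iff (by nlinarith [hb.1])]
  linarith

lemma eq_chain_of_logb_odds {ε M : ℝ} {n : ℕ} {e : ℕ → ℝ}
    (he : ∀ s ≤ n, e s ∈ Set.Ioo (0 : ℝ) 1) (h0 : logb 2 (1 - e 0) - logb 2 (e 0) = M)
    (hsucc : ∀ s < n, logb 2 (1 - e (s + 1)) - logb 2 (e (s + 1)) =
      M + (1 - ε) * logb 2 (1 - e s)) :
    ∀ s ≤ n, e s = chain ε (e 0) s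
  | 0, _ => rfl
  | 1, hs => by
    have h1e : 0 < 1 - e 0 := by linarith [(he 0 (by omega)).2]
    refine eq_div_of_logb_odds (he 1 hs) (he 0 (by omega)) (by simpa using h1e) ?_
    rw [hsucc 0 (by omega), div_one, ← h0]
  | s + 2, hs => by
    have hb := eq_chain_of_logb_odds he h0 hsucc (s + 1) (by omega)
    have ha := eq_chain_of_logb_odds he h0 hsucc s (by omega)
    have h1a : 0 < 1 - e s := by linarith [(he s (by omega)).2]
    have h1b : 0 < 1 - e (s + 1) := by linarith [(he (s + 1) (by omega)).2]
    rw [chain, ← hb, ← ha]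
    refine eq_div_of_logb_odds (he (s + 2) hs) (he (s + 1) (by omega)) (div_pos h1b h1a) ?_
    rw [hsucc (s + 1) (by omega), hsucc s (by omega), logb_div h1b.ne' h1a.ne']
    ring

lemma eq_chain_of_isMaxOn_Rgap {ε M : ℝ} (hε : ε < 1) {n : ℕ} {δ : ℕ → ℝ}
    (hδ : δ ∈ unitCube (n + 1))
    (hmax : IsMaxOn (Rgap (1 - ε) M (n + 1)) (unitCube (n + 1)) δ) :
    δ n ∈ Set.Ioo (0 : ℝ) 1 ∧ logb 2 (1 - δ n) - logb 2 (δ n) = M ∧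
      ∀ j ≤ n, δ j = chain ε (δ n) (n - j) := by
  have hc : 0 < 1 - ε := by linarith
  have hshift : ∀ j ≤ n, (fun i => δ (j + i)) ∈ unitCube (n - j + 1) ∧
      IsMaxOn (Rgap (1 - ε) M (n - j + 1)) (unitCube (n - j + 1)) (fun i => δ (j + i)) := by
    intro j hj
    have e : n - j + 1 + j = n + 1 := by omega
    exact ⟨fun i hi => hδ (j + i) (by omega), isMaxOn_Rgap_shift hc j (e ▸ hδ) (e ▸ hmax)⟩
  have hfo : ∀ j ≤ n, δ j ∈ Set.Ioo (0 : ℝ) 1 ∧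
      logb 2 (1 - δ j) - logb 2 (δ j) = -Rgap (1 - ε) M (n - j) (fun i => δ (j + 1 + i)) := by
    intro j hj
    simpa only [add_zero, add_assoc, add_comm 1] using
      first_order_of_isMaxOn_Rgap hc (hshift j hj).1 (hshift j hj).2
  have hlast : logb 2 (1 - δ n) - logb 2 (δ n) = M := by
    rw [(hfo n le_rfl).2, Nat.sub_self, Rgap, neg_neg]
  have hstep : ∀ j < n,
      logb 2 (1 - δ j) - logb 2 (δ j) = M + (1 - ε) * logb 2 (1 - δ (j + 1)) := by
    intro j hj
    have := Rgap_eq_of_isMaxOn hc (hshift (j + 1) hj).1 (hshift (j + 1) hj).2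
    rw [show n - (j + 1) + 1 = n - j by omega, add_zero] at this
    rw [(hfo j hj.le).2, this]
    ring
  refine ⟨(hfo n le_rfl).1, hlast, fun j hj => ?_⟩
  have := eq_chain_of_logb_odds (ε := ε) (n := n) (e := fun s => δ (n - s))
    (fun s hs => (hfo (n - s) (by omega)).1) (by simpa using hlast)
    (fun s hs => by
      simpa [show n - (s + 1) + 1 = n - s by omega] using hstep (n - (s + 1)) (by omega))
    (n - j) (by omega)
  simpa [Nat.sub_sub_self hj] using this

lemma exists_chain_eq_of_isMaxOn_Rfun {ε : ℝ} (hε : ε ≤ 1) {k : ℕ} {δ : ℕ → ℝ}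
    (hδ : δ ∈ unitCube k) (hmax : IsMaxOn (Rfun ε k) (unitCube k) δ) :
    ∃ t ∈ Set.Icc (0 : ℝ) (1 / 2),
      Rfun ε k (fun j => chain ε t (k - 1 - j)) = Rfun ε k δ := by
  rcases eq_or_ne ε 1 with rfl | hε1
  · exact ⟨0, ⟨le_rfl, by norm_num⟩, by simp [Rfun]⟩
  rcases k with _ | n
  · exact ⟨0, ⟨le_rfl, by norm_num⟩, by simp [Rfun]⟩
  have hM : 0 ≤ Rfun ε (n + 1) δ := by
    simpa [Rfun_zero] using hmax (zero_mem_unitCube (n + 1))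
  obtain ⟨ht, hodds, hchain⟩ := eq_chain_of_isMaxOn_Rgap (hε.lt_of_ne hε1) hδ
    (isMaxOn_Rgap_of_isMaxOn_Rfun hε hδ hmax)
  refine ⟨δ n, ⟨ht.1.le, ?_⟩, Rfun_congr fun j hj => ?_⟩
  · have := (logb_le_logb one_lt_two ht.1 (sub_pos.2 ht.2)).1 (by linarith)
    linarith
  · rw [hchain j (by omega)]
    simp

theorem max_cube_eq_max_one_parameter_family_general
    (ε : ℝ) (hε : ε ∈ Set.Icc (0 : ℝ) 1) (k : ℕ) :
    ∃ M : ℝ,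
      IsGreatest {r : ℝ | ∃ δ : ℕ → ℝ,
        (∀ i < k, δ i ∈ Set.Icc (0 : ℝ) 1) ∧ r = Rfun ε k δ} M ∧
      IsGreatest {r : ℝ | ∃ t ∈ Set.Icc (0 : ℝ) (1 / 2),
        r = Rfun ε k (fun j => chain ε t (k - 1 - j))} M := by
  obtain ⟨δ, hδ, hmax⟩ := exists_isMaxOn_Rfun hε.2 k
  obtain ⟨t, ht, hRt⟩ := exists_chain_eq_of_isMaxOn_Rfun hε.2 hδ hmax
  refine ⟨Rfun ε k δ, ⟨⟨δ, hδ, rfl⟩, ?_⟩, ⟨⟨t, ht, hRt.symm⟩, ?_⟩⟩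
  · rintro r ⟨δ', hδ', rfl⟩
    exact hmax hδ'
  · rintro r ⟨t', ht', rfl⟩
    refine hmax fun j _ => Set.Ico_subset_Icc_self (chain_mem_Ico ⟨ht'.1, ?_⟩ _)
    linarith [ht'.2]

/-- Let `ε ∈ [0,1]` and `k ≥ 1`.  For `t ∈ [0,1]` define `δ_{k−1}(t) = t` and obtain
`δ_{k−2}(t),…,δ₀(t)` by descending along the recursion (∗) (so `δ_j(t) = chain ε t (k−1−j)`).
Then the maximum of `R_ε` over the full cube `[0,1]^k` equals its maximum over the
one-parameter family `{(δ₀(t),…,δ_{k−2}(t), t) : t ∈ [0,1/2]}`. -/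
theorem max_cube_eq_max_one_parameter_family
    (ε : ℝ) (hε : ε ∈ Set.Icc (0 : ℝ) 1) (k : ℕ) (hk : 1 ≤ k) :
    ∃ M : ℝ,
      IsGreatest {r : ℝ | ∃ δ : ℕ → ℝ,
        (∀ i < k, δ i ∈ Set.Icc (0 : ℝ) 1) ∧ r = Rfun ε k δ} M ∧
      IsGreatest {r : ℝ | ∃ t ∈ Set.Icc (0 : ℝ) (1 / 2),
        r = Rfun ε k (fun j => chain ε t (k - 1 - j))} M :=
  max_cube_eq_max_one_parameter_family_general ε hε k
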